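/- arXiv:2209.01886 — 6 statements merged into one kernel-verified Lean document; each statement's English description precedes it below -/
import Mathlib

section
/- The labelled transition system of Simple Choreographies satisfies the diamond property: if C --μ1--> C1 and C --μ2--> C2 with μ1 ≠ μ2, then there exists C' such that C1 --μ2--> C' and C2 --μ1--> C'. -/
inductive SC (P : Type) : Type
  | com : P → P → SC P → SC P
  | nil : SC P

inductive SCStep {P : Type} : SC P → P × P → SC P → Prop
  | com (p q : P) (C : SC P) : SCStep (SC.com p q C) (p, q) C
  | delay {C C' : SC P} {r s : P} (p q : P) :
      SCStep C (r, s) C' → p ≠ r → p ≠ s → q ≠ r → q ≠ s →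
      SCStep (SC.com p q C) (r, s) (SC.com p q C')

theorem stmt1 {P : Type} {C C1 C2 : SC P} {μ1 μ2 : P × P}
    (h1 : SCStep C μ1 C1) (h2 : SCStep C μ2 C2) (hne : μ1 ≠ μ2) :
    ∃ C' : SC P, SCStep C1 μ2 C' ∧ SCStep C2 μ1 C' := by
  induction h1 generalizing C2 μ2 with
  | com p q C =>
    cases h2 with
    | com => exact absurd rfl hne
    | delay _ _ hs hr1 hr2 hr3 hr4 =>
      exact ⟨_, hs, SCStep.com p q _⟩
  | delay p q hs hr1 hr2 hr3 hr4 ih =>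
    cases h2 with
    | com => exact ⟨_, SCStep.com p q _, hs⟩
    | delay _ _ hs' a b c d =>
      obtain ⟨D, hD1, hD2⟩ := ih hs' hne
      exact ⟨SC.com p q D, SCStep.delay p q hD1 a b c d,
        SCStep.delay p q hD2 hr1 hr2 hr3 hr4⟩
end

section
/- The transition relation of Simple Choreographies is deterministic: if C --μ--> C1 and C --μ--> C2 then C1 = C2. -/
theorem stmt2 {P : Type} {C C1 C2 : SC P} {μ : P × P}
    (h1 : SCStep C μ C1) (h2 : SCStep C μ C2) : C1 = C2 := by
  induction h1 generalizing C2 with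
  | com p q C =>
    cases h2 with
    | com => rfl
    | delay _ _ _ hp _ _ _ => exact absurd rfl hp
  | delay p q h hp hs hq hqs ih =>
    cases h2 with
    | com => exact absurd rfl hp
    | delay _ _ h2' _ _ _ _ => rw [ih h2']
end

section
/- EPP completeness for Simple Choreographies: for any choreography C (with all communications between distinct processes), if C --(p->q)--> C' then the projected network ⟦C⟧ makes a transition labeled p->q to ⟦C'⟧. -/
/-- All communications in the choreography are between distinct processes. -/
def SCwf {P : Type} : SC P → Prop
  | SC.com p q C => p ≠ q ∧ SCwf C
  | SC.nil => True

/-- Simple processes. -/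
inductive Proc (P : Type) : Type
  | send : P → Proc P → Proc P
  | recv : P → Proc P → Proc P
  | nil : Proc P

/-- Networks are functions from process names to processes. -/
abbrev Network (P : Type) := P → Proc P

/-- Network transition labelled by (p, q). -/
def NStep {P : Type} [DecidableEq P] (N : Network P) (μ : P × P) (N' : Network P) : Prop :=
  ∃ Pc Qc : Proc P,
    N μ.1 = Proc.send μ.2 Pc ∧ N μ.2 = Proc.recv μ.1 Qc ∧
    N' = Function.update (Function.update N μ.1 Pc) μ.2 Qc

/-- Process projection. -/
def projB {P : Type} [DecidableEq P] : SC P → P → Proc P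
  | SC.com p q C, r =>
      if r = p then Proc.send q (projB C r)
      else if r = q then Proc.recv p (projB C r)
      else projB C r
  | SC.nil, _ => Proc.nil

/-- Endpoint projection. -/
def epp {P : Type} [DecidableEq P] (C : SC P) : Network P := fun r => projB C r

theorem stmt4_aux {P : Type} [DecidableEq P] {C C' : SC P} {μ : P × P}
    (h : SCStep C μ C') (hwf : SCwf C) :
    NStep (epp C) μ (epp C') := by
  induction h with
  | com p q C =>
    obtain ⟨hpq, hwf⟩ := hwf
    refine ⟨projB C p, projB C q, ?_, ?_, ?_⟩
    · simp [epp, projB]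
    · simp [epp, projB, Ne.symm hpq]
    · funext x
      by_cases hxp : x = p <;> by_cases hxq : x = q <;>
        simp_all [epp, projB, Function.update]
  | delay a b hstep har has hbr hbs ih =>
    obtain ⟨hab, hwf⟩ := hwf
    obtain ⟨Pc, Qc, h1, h2, h3⟩ := ih hwf
    rename_i C C' r s
    refine ⟨Pc, Qc, ?_, ?_, ?_⟩
    · simpa [epp, projB, Ne.symm har, Ne.symm hbr] using h1
    · simpa [epp, projB, Ne.symm has, Ne.symm hbs] using h2
    · funext x
      have h3' := congrFun h3
      by_cases hxa : x = a <;> by_cases hxb : x = b <;>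
        by_cases hxr : x = r <;> by_cases hxs : x = s <;>
        simp_all [epp, projB, Function.update]

theorem stmt4 {P : Type} [DecidableEq P] {C C' : SC P} {p q : P}
    (hwf : SCwf C) (h : SCStep C (p, q) C') :
    NStep (epp C) (p, q) (epp C') :=
  stmt4_aux h hwf
end

section
/- EPP soundness for Simple Choreographies: for any choreography C (all communications between distinct processes), if ⟦C⟧ --(p->q)--> N then there exists C' such that C --(p->q)--> C' and N = ⟦C'⟧ (as functions on process names). -/
theorem stmt5 {P : Type} [DecidableEq P] {C : SC P} {p q : P} {N : Network P}
    (hwf : SCwf C) (h : NStep (epp C) (p, q) N) :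
    ∃ C' : SC P, SCStep C (p, q) C' ∧ N = epp C' := by

  induction C generalizing N with
  | nil =>
    obtain ⟨Pc, Qc, h1, _, _⟩ := h
    simp [epp, projB] at h1
  | com r s C ih =>
    obtain ⟨hrs, hwfC⟩ := hwf
    obtain ⟨Pc, Qc, h1, h2, h3⟩ := h
    simp only [epp, projB] at h1 h2
    by_cases hpr : p = r
    · subst hpr
      rw [if_pos rfl] at h1
      injection h1 with hqs hPc
      subst hqs
      rw [if_neg (Ne.symm hrs), if_pos rfl] at h2
      injection h2 with _ hQc
      refine ⟨C, SCStep.com p s C, ?_⟩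
      subst h3
      funext x
      by_cases hx1 : x = s
      · subst hx1
        simp [Function.update, epp, ← hQc]
      · by_cases hx2 : x = p
        · subst hx2
          simp [Function.update, hx1, epp, ← hPc]
        · simp [Function.update, hx1, hx2, epp, projB]
    · rw [if_neg hpr] at h1
      by_cases hps : p = s
      · rw [if_pos hps] at h1; exact absurd h1 (by simp)
      · rw [if_neg hps] at h1
        by_cases hqr : q = r
        · rw [if_pos hqr] at h2; exact absurd h2 (by simp)
        · rw [if_neg hqr] at h2
          by_cases hqs : q = s
          · rw [if_pos hqs] at h2
            injection h2 with hrp _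
            exact absurd hrp.symm hpr
          · rw [if_neg hqs] at h2
            obtain ⟨C', hstep, heq⟩ := ih hwfC
              ⟨Pc, Qc, h1, h2, rfl⟩
            refine ⟨SC.com r s C', SCStep.delay r s hstep
              (fun hh => hpr hh.symm) (fun hh => hqr hh.symm)
              (fun hh => hps hh.symm) (fun hh => hqs hh.symm), ?_⟩
            subst h3
            have hC' : ∀ y, Function.update (Function.update (epp C) p Pc) q Qc y = projB C' y := by
              intro y; rw [heq]; rfl
            funext x
            by_cases hx1 : x = q
            · subst hx1
              have := hC' x
              simp [Function.update] at this ⊢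
              simp [epp, projB, hqr, hqs, ← this]
            · by_cases hx2 : x = p
              · subst hx2
                have := hC' x
                simp [Function.update, hx1] at this ⊢
                simp [epp, projB, hpr, hps, ← this]
              · have := hC' x
                simp [Function.update, hx1, hx2] at this ⊢
                simp only [epp, projB]
                rw [← this]
                simp [epp]
end

section
/- Deadlock-freedom by design: any network obtained by EPP of a Simple Choreography is deadlock-free, i.e., for any choreography C (communications between distinct processes) and any network N reachable from ⟦C⟧ by a sequence of transitions, either N maps every process to the terminated process 0 or N can make a transition. -/
lemma SCStep.wf' {P : Type} {C C' : SC P} {μ : P × P}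
    (h : SCStep C μ C') (hwf : SCwf C) : SCwf C' := by
  induction h with
  | com => exact hwf.2
  | delay p q hstep _ _ _ _ ih => exact ⟨hwf.1, ih hwf.2⟩

lemma NStep_epp {P : Type} [DecidableEq P] {C : SC P} {μ : P × P} {N' : Network P}
    (h : NStep (epp C) μ N') : ∃ C', SCStep C μ C' ∧ N' = epp C' := by
  obtain ⟨r, s⟩ := μ
  induction C generalizing N' with
  | nil => obtain ⟨Pc, Qc, h1, _⟩ := h; simp [epp, projB] at h1
  | com p q C ih =>
    obtain ⟨Pc, Qc, h1, h2, h3⟩ := h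
    simp only [epp, projB] at h1 h2
    by_cases hrp : r = p
    · subst hrp
      rw [if_pos rfl] at h1
      cases h1
      by_cases hsr : s = r
      · rw [if_pos hsr] at h2; cases h2
      · rw [if_neg hsr, if_pos rfl] at h2
        cases h2
        refine ⟨C, SCStep.com r s C, funext fun t => ?_⟩
        rw [h3]
        simp only [Function.update_apply, epp, projB]
        by_cases hts : t = s
        · rw [if_pos hts, hts]
        · rw [if_neg hts]
          by_cases htr : t = r
          · rw [if_pos htr, htr]
          · rw [if_neg htr, if_neg htr, if_neg hts]
    · rw [if_neg hrp] at h1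
      by_cases hrq : r = q
      · rw [if_pos hrq] at h1; cases h1
      rw [if_neg hrq] at h1
      by_cases hsp : s = p
      · rw [if_pos hsp] at h2; cases h2
      rw [if_neg hsp] at h2
      by_cases hsq : s = q
      · rw [if_pos hsq] at h2; cases h2; exact absurd rfl hrp
      rw [if_neg hsq] at h2
      obtain ⟨C', hstep, hM⟩ := ih (N' := Function.update (Function.update (epp C) r Pc) s Qc)
        ⟨Pc, Qc, h1, h2, rfl⟩
      have key : ∀ u, (if u = s then Qc else if u = r then Pc else projB C u) = projB C' u := by
        intro u
        have := congrFun hM u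
        simpa [Function.update_apply, epp] using this
      refine ⟨SC.com p q C', SCStep.delay p q hstep (Ne.symm hrp) (Ne.symm hsp)
        (Ne.symm hrq) (Ne.symm hsq), funext fun t => ?_⟩
      rw [h3]
      simp only [Function.update_apply, epp, projB]
      by_cases hts : t = s
      · have ks := key s
        rw [if_pos rfl] at ks
        rw [if_pos hts, if_neg (fun h : t = p => hsp (hts.symm.trans h)),
          if_neg (fun h : t = q => hsq (hts.symm.trans h))]
        rw [hts]; exact ks
      · rw [if_neg hts]
        by_cases htr : t = r
        · have kr := key r
          rw [if_neg (htr ▸ hts), if_pos rfl] at kr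
          rw [if_pos htr, if_neg (fun h : t = p => hrp (htr.symm.trans h)),
            if_neg (fun h : t = q => hrq (htr.symm.trans h))]
          rw [htr]; exact kr
        · rw [if_neg htr]
          have kt := key t
          rw [if_neg hts, if_neg htr] at kt
          by_cases htp : t = p
          · rw [if_pos htp, if_pos htp, kt]
          · rw [if_neg htp, if_neg htp]
            by_cases htq : t = q
            · rw [if_pos htq, if_pos htq, kt]
            · rw [if_neg htq, if_neg htq]; exact kt

lemma epp_progress {P : Type} [DecidableEq P] (p q : P) (C : SC P) (hpq : p ≠ q) :
    ∃ μ N', NStep (epp (SC.com p q C)) μ N' := by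
  refine ⟨(p, q), _, projB C p, projB C q, ?_, ?_, rfl⟩
  · simp [epp, projB]
  · simp [epp, projB, Ne.symm hpq]

theorem stmt6 {P : Type} [DecidableEq P] {C : SC P} {N : Network P}
    (hwf : SCwf C)
    (hreach : Relation.ReflTransGen (fun M M' => ∃ μ, NStep M μ M') (epp C) N) :
    (∀ p, N p = Proc.nil) ∨ ∃ (μ : P × P) (N' : Network P), NStep N μ N' := by
  have key : ∃ C', SCwf C' ∧ N = epp C' := by
    induction hreach with
    | refl => exact ⟨C, hwf, rfl⟩
    | tail hab hbc ih =>
        obtain ⟨C', hwf', rfl⟩ := ih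
        obtain ⟨μ, hstep⟩ := hbc
        obtain ⟨C'', hsc, hN⟩ := NStep_epp hstep
        exact ⟨C'', hsc.wf' hwf', hN⟩
  obtain ⟨C', hwf', rfl⟩ := key
  cases C' with
  | nil => left; intro p; simp [epp, projB]
  | com p q C2 => right; exact epp_progress p q C2 hwf'.1
end

section
/- Determinism of CC choreography transitions: if (C,s) transitions under D with rich label t1 to (C1,s1) and with rich label t2 to (C2,s2), and t1 = t2, then C1 = C2 and s1 ≈ s2 (states are extensionally equal). -/
/-- Interactions: value communications and label selections.
Labels `left`/`right` are modelled as `Bool` (`true` = left). -/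
inductive Eta (P E V : Type) : Type
  | com : P → E → P → V → Eta P E V
  | sel : P → P → Bool → Eta P E V

/-- CC choreographies over processes `P`, expressions `E`, Boolean
expressions `Bx`, variables `V` and procedure names `X`. -/
inductive Chor (P E Bx V X : Type) : Type
  | seq : Eta P E V → Chor P E Bx V X → Chor P E Bx V X
  | cond : P → Bx → Chor P E Bx V X → Chor P E Bx V X → Chor P E Bx V X
  | call : X → Chor P E Bx V X
  | rt : X → List P → Chor P E Bx V X → Chor P E Bx V X
  | endC : Chor P E Bx V X

/-- Rich transition labels. -/
inductive RL (P Val V X : Type) : Type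
  | com : P → Val → P → V → RL P Val V X
  | sel : P → P → Bool → RL P Val V X
  | cond : P → RL P Val V X
  | call : X → P → RL P Val V X

/-- Processes of an interaction. -/
def etaPids {P E V : Type} : Eta P E V → List P
  | .com p _ q _ => [p, q]
  | .sel p q _ => [p, q]

/-- Processes of a rich label. -/
def rlPids {P Val V X : Type} : RL P Val V X → List P
  | .com p _ q _ => [p, q]
  | .sel p q _ => [p, q]
  | .cond p => [p]
  | .call _ p => [p]

section CC
variable {P E Bx V X Val : Type} [DecidableEq P] [DecidableEq V]

/-- States. -/
abbrev State (P V Val : Type) := P → V → Val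

/-- Extensional equivalence of states. -/
def StateEq (s s' : State P V Val) : Prop := ∀ p x, s p x = s' p x

/-- State update: set variable `x` of process `q` to `v`. -/
def supd (s : State P V Val) (q : P) (x : V) (v : Val) : State P V Val :=
  fun r y => if r = q then (if y = x then v else s r y) else s r y

/-- Semantics of CC choreographies, parameterised on evaluation functions
`Ev` and `BEv` and on a set of procedure definitions `D`. -/
inductive CCStep (Ev : E → State P V Val → P → Val)
    (BEv : Bx → State P V Val → P → Bool)
    (D : X → List P × Chor P E Bx V X) :
    Chor P E Bx V X → State P V Val → RL P Val V X →
    Chor P E Bx V X → State P V Val → Prop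
  | com {p e q x C s s'} :
      StateEq s' (supd s q x (Ev e s p)) →
      CCStep Ev BEv D (.seq (.com p e q x) C) s (.com p (Ev e s p) q x) C s'
  | sel {p q l C s s'} :
      StateEq s s' →
      CCStep Ev BEv D (.seq (.sel p q l) C) s (.sel p q l) C s'
  | then_ {p b C1 C2 s s'} :
      BEv b s p = true → StateEq s s' →
      CCStep Ev BEv D (.cond p b C1 C2) s (.cond p) C1 s'
  | else_ {p b C1 C2 s s'} :
      BEv b s p = false → StateEq s s' →
      CCStep Ev BEv D (.cond p b C1 C2) s (.cond p) C2 s'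
  | delay_eta {η C C' s s' t} :
      (∀ r ∈ etaPids η, r ∉ rlPids t) →
      CCStep Ev BEv D C s t C' s' →
      CCStep Ev BEv D (.seq η C) s t (.seq η C') s'
  | delay_cond {p b C1 C1' C2 C2' s s' t} :
      p ∉ rlPids t →
      CCStep Ev BEv D C1 s t C1' s' →
      CCStep Ev BEv D C2 s t C2' s' →
      CCStep Ev BEv D (.cond p b C1 C2) s t (.cond p b C1' C2') s'
  | delay_call {Y ps C C' s s' t} :
      (∀ r ∈ ps, r ∉ rlPids t) →
      CCStep Ev BEv D C s t C' s' →
      CCStep Ev BEv D (.rt Y ps C) s t (.rt Y ps C') s'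
  | call_local {Y p s s'} :
      StateEq s s' → (D Y).1.length = 1 → p ∈ (D Y).1 →
      CCStep Ev BEv D (.call Y) s (.call Y p) (D Y).2 s'
  | call_start {Y p s s'} :
      StateEq s s' → 1 < (D Y).1.length → p ∈ (D Y).1 →
      CCStep Ev BEv D (.call Y) s (.call Y p)
        (.rt Y ((D Y).1.erase p) (D Y).2) s'
  | call_enter {Y ps C p s s'} :
      StateEq s s' → 1 < ps.length → p ∈ ps →
      CCStep Ev BEv D (.rt Y ps C) s (.call Y p) (.rt Y (ps.erase p) C) s'
  | call_finish {Y ps C p s s'} :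
      StateEq s s' → ps.length = 1 → p ∈ ps →
      CCStep Ev BEv D (.rt Y ps C) s (.call Y p) C s'

end CC

theorem stmt18 {P E Bx V X Val : Type} [DecidableEq P] [DecidableEq V]
    (Ev : E → State P V Val → P → Val) (BEv : Bx → State P V Val → P → Bool)
    (D : X → List P × Chor P E Bx V X)
    {C C1 C2 : Chor P E Bx V X} {s s1 s2 : State P V Val} {t1 t2 : RL P Val V X}
    (h1 : CCStep Ev BEv D C s t1 C1 s1) (h2 : CCStep Ev BEv D C s t2 C2 s2)
    (ht : t1 = t2) :
    C1 = C2 ∧ StateEq s1 s2 := by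
  subst ht
  induction h1 generalizing C2 s2 with
  | com h =>
    cases h2 with
    | com h' => exact ⟨rfl, fun r y => (h r y).trans (h' r y).symm⟩
    | delay_eta hd _ => simp [etaPids, rlPids] at hd
  | sel h =>
    cases h2 with
    | sel h' => exact ⟨rfl, fun r y => (h r y).symm.trans (h' r y)⟩
    | delay_eta hd _ => simp [etaPids, rlPids] at hd
  | then_ hb h =>
    cases h2 with
    | then_ hb' h' => exact ⟨rfl, fun r y => (h r y).symm.trans (h' r y)⟩
    | else_ hb' h' => simp [hb] at hb'
    | delay_cond hd _ _ => simp [rlPids] at hd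
  | else_ hb h =>
    cases h2 with
    | then_ hb' h' => simp [hb] at hb'
    | else_ hb' h' => exact ⟨rfl, fun r y => (h r y).symm.trans (h' r y)⟩
    | delay_cond hd _ _ => simp [rlPids] at hd
  | delay_eta hd hstep ih =>
    cases h2 with
    | com h' => simp [etaPids, rlPids] at hd
    | sel h' => simp [etaPids, rlPids] at hd
    | delay_eta hd' hstep' =>
      obtain ⟨hC, hs⟩ := ih hstep'
      exact ⟨by rw [hC], hs⟩
  | delay_cond hd hstep1 hstep2 ih1 ih2 =>
    cases h2 with
    | then_ hb' h' => simp [rlPids] at hd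
    | else_ hb' h' => simp [rlPids] at hd
    | delay_cond hd' hstep1' hstep2' =>
      obtain ⟨hC1, hs⟩ := ih1 hstep1'
      obtain ⟨hC2, _⟩ := ih2 hstep2'
      exact ⟨by rw [hC1, hC2], hs⟩
  | delay_call hd hstep ih =>
    cases h2 with
    | delay_call hd' hstep' =>
      obtain ⟨hC, hs⟩ := ih hstep'
      exact ⟨by rw [hC], hs⟩
    | call_enter h' hl hp => exact absurd (hd _ hp) (by simp [rlPids])
    | call_finish h' hl hp => exact absurd (hd _ hp) (by simp [rlPids])
  | call_local h hl hp =>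
    cases h2 with
    | call_local h' hl' hp' => exact ⟨rfl, fun r y => (h r y).symm.trans (h' r y)⟩
    | call_start h' hl' hp' => omega
  | call_start h hl hp =>
    cases h2 with
    | call_local h' hl' hp' => omega
    | call_start h' hl' hp' => exact ⟨rfl, fun r y => (h r y).symm.trans (h' r y)⟩
  | call_enter h hl hp =>
    cases h2 with
    | delay_call hd' hstep' => exact absurd (hd' _ hp) (by simp [rlPids])
    | call_enter h' hl' hp' => exact ⟨rfl, fun r y => (h r y).symm.trans (h' r y)⟩
    | call_finish h' hl' hp' => omega
  | call_finish h hl hp =>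
    cases h2 with
    | delay_call hd' hstep' => exact absurd (hd' _ hp) (by simp [rlPids])
    | call_enter h' hl' hp' => omega
    | call_finish h' hl' hp' => exact ⟨rfl, fun r y => (h r y).symm.trans (h' r y)⟩
end
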